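/- Let H be a graph with U ⊆ V(H), p = (p_1, p_2) an ordered partition of |U|, and p' = (p_2, p_1). Then T ↦ T* is a bijection from the union over all complete tiered graphs Q on U with tier sizes p of the spanning trees of H ∪ Q, to the union over all complete tiered graphs Q' on U with tier sizes p' of the spanning trees of H ∪ Q', where T* = E_0 ∪ F' with E_0 = E(T) ∩ E(H) and F' the dual of the tiered forest F = (U, E(T) \ E_0). -/

import Mathlib

open Finset

attribute [local instance 10] Classical.propDecidable

noncomputable section

/-- An edge of a simple graph on `ℕ`, stored as an ordered pair `(u,v)` with `u < v` intended. -/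
abbrev PEdge : Type := ℕ × ℕ

/-- A labelled edge (for multigraphs): an endpoint pair together with a label. -/
abbrev LEdge : Type := (ℕ × ℕ) × ℕ

def adjP (E : Finset PEdge) (u v : ℕ) : Prop := (u, v) ∈ E ∨ (v, u) ∈ E

def reachP (E : Finset PEdge) : ℕ → ℕ → Prop := Relation.ReflTransGen (adjP E)

def connP (V : Finset ℕ) (E : Finset PEdge) : Prop :=
  (∀ e ∈ E, e.1 ∈ V ∧ e.2 ∈ V) ∧ ∀ u ∈ V, ∀ v ∈ V, reachP E u v

def IsTreeOn (V : Finset ℕ) (E : Finset PEdge) : Prop := connP V E ∧ E.card + 1 = V.card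

/-- A graph on a finite set of naturals together with a tiering map. -/
structure PreGraph where
  V : Finset ℕ
  E : Finset PEdge
  t : ℕ → ℕ

/-- `G` is a tiered graph with two tiers. -/
def IsTiered (G : PreGraph) : Prop :=
  (∀ v ∈ G.V, 0 < v) ∧
  (∀ e ∈ G.E, e.1 ∈ G.V ∧ e.2 ∈ G.V ∧ e.1 < e.2) ∧
  (∀ v ∈ G.V, G.t v = 1 ∨ G.t v = 2) ∧
  (∀ e ∈ G.E, G.t e.1 < G.t e.2)

/-- acyclicity: every edge is a bridge. -/
def IsForest (G : PreGraph) : Prop := ∀ e ∈ G.E, ¬ reachP (G.E.erase e) e.1 e.2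

def IsTreeG (G : PreGraph) : Prop := IsTreeOn G.V G.E

/-- the connected component (vertex set) of `x`. -/
def comp (V : Finset ℕ) (E : Finset PEdge) (x : ℕ) : Finset ℕ :=
  V.filter fun y => reachP E x y

/-- the order-reversing involution `x_i ↦ x_{s+1-i}` of a finite set `V = {x_1 < ... < x_s}`. -/
def flipMap (V : Finset ℕ) (x : ℕ) : ℕ :=
  if hx : x ∈ V then
    ((V.orderIsoOfFin rfl)
      ⟨V.card - 1 - ((V.orderIsoOfFin rfl).symm ⟨x, hx⟩).1, by
        have h := ((V.orderIsoOfFin rfl).symm ⟨x, hx⟩).isLt; omega⟩).1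
  else x

/-- the dual of a (connected) tiered graph, via the global vertex ordering. -/
def dual (G : PreGraph) : PreGraph where
  V := G.V
  E := G.E.image fun e => (flipMap G.V e.2, flipMap G.V e.1)
  t := fun x => if x ∈ G.V then 3 - G.t (flipMap G.V x) else G.t x

/-- the componentwise dual of a (possibly disconnected) tiered graph. -/
def cdual (G : PreGraph) : PreGraph where
  V := G.V
  E := G.E.image fun e => (flipMap (comp G.V G.E e.1) e.2, flipMap (comp G.V G.E e.1) e.1)
  t := fun x => if x ∈ G.V then 3 - G.t (flipMap (comp G.V G.E x) x) else G.t x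

/-- the recursive weight of a tiered tree (fuel-based implementation; the recursion
depth is bounded by the number of vertices). -/
def weightAux : ℕ → PreGraph → ℕ
  | 0, _ => 0
  | fuel + 1, T =>
    if h : 2 ≤ T.V.card then
      let v := T.V.min' (Finset.card_pos.mp (by omega))
      let V' := T.V.erase v
      let E' := T.E.filter fun e => e.1 ≠ v ∧ e.2 ≠ v
      ∑ u ∈ V'.filter (fun u => adjP T.E v u),
        (((comp V' E' u).filter fun y => y < u ∧ T.t v < T.t y).card
          + weightAux fuel ⟨comp V' E' u, E'.filter fun e => e.1 ∈ comp V' E' u, T.t⟩)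
    else 0

def weight (T : PreGraph) : ℕ := weightAux T.V.card T

/-- edges of a complete tiered graph with tier 1 vertex set `A` and tier 2 vertex set `B`. -/
def ctE2 (A B : Finset ℕ) : Finset PEdge := (A ×ˢ B).filter fun e => e.1 < e.2

/-- the edge set of the complete tiered graph determined by a two-tier tiered graph `G`. -/
def ctE (G : PreGraph) : Finset PEdge :=
  ctE2 (G.V.filter fun v => G.t v = 1) (G.V.filter fun v => G.t v = 2)

/-- edge set of the complete tiered graph on `[n]` determined by a tiering map `t`. -/
def ctEM (n : ℕ) (t : ℕ → ℕ) : Finset PEdge :=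
  (Finset.Icc 1 n ×ˢ Finset.Icc 1 n).filter fun e => e.1 < e.2 ∧ t e.1 < t e.2

def extActiveP (T : Finset PEdge) (ω : PEdge → ℝ) (e : PEdge) : Prop :=
  e ∉ T ∧ reachP T e.1 e.2 ∧ ∀ e' ∈ T, ¬ reachP (T.erase e') e.1 e.2 → ω e < ω e'

/-- external activity of the spanning forest `T` in the graph with edge set `E`. -/
def eaP (E T : Finset PEdge) (ω : PEdge → ℝ) : ℕ := (E.filter (extActiveP T ω)).card

def adjL (E : Finset LEdge) (u v : ℕ) : Prop := ∃ e ∈ E, e.1 = (u, v) ∨ e.1 = (v, u)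
def reachL (E : Finset LEdge) : ℕ → ℕ → Prop := Relation.ReflTransGen (adjL E)
def connL (V : Finset ℕ) (E : Finset LEdge) : Prop := ∀ u ∈ V, ∀ v ∈ V, reachL E u v
def IsLTree (V : Finset ℕ) (T : Finset LEdge) : Prop := connL V T ∧ T.card + 1 = V.card

def extActiveL (T : Finset LEdge) (ω : LEdge → ℝ) (e : LEdge) : Prop :=
  e ∉ T ∧ reachL T e.1.1 e.1.2 ∧ ∀ e' ∈ T, ¬ reachL (T.erase e') e.1.1 e.1.2 → ω e < ω e'

def eaL (E T : Finset LEdge) (ω : LEdge → ℝ) : ℕ := (E.filter (extActiveL T ω)).card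

def omega1 (N : ℕ) (e : PEdge) : ℝ := (e.1 : ℝ) + (e.2 : ℝ) / (N : ℝ)
def omega2 (N : ℕ) (e : PEdge) : ℝ := ((N + 1 - e.2 : ℕ) : ℝ) + ((N + 1 - e.1 : ℕ) : ℝ) / (N : ℝ)
def omegaLex (n : ℕ) (e : PEdge) : ℝ := ((e.1 * (n + 1) + e.2 : ℕ) : ℝ)

/-- representative (minimum) of the component of `x` in the forest `F` on vertex set `V`. -/
def rep (V : Finset ℕ) (F : Finset LEdge) (x : ℕ) : ℕ :=
  if hx : x ∈ V then
    (V.filter fun y => reachL F x y).min'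
      ⟨x, Finset.mem_filter.mpr ⟨hx, Relation.ReflTransGen.refl⟩⟩
  else x

/-- image of an edge in the quotient graph `G • F`; the label encodes the original edge. -/
def quotEdge (ρ : ℕ → ℕ) (e : LEdge) : LEdge :=
  ((ρ e.1.1, ρ e.1.2), Nat.pair (Nat.pair e.1.1 e.1.2) e.2)

/-- recover the original edge from a quotient edge. -/
def decodeE (e : LEdge) : LEdge :=
  (((Nat.unpair (Nat.unpair e.2).1).1, (Nat.unpair (Nat.unpair e.2).1).2), (Nat.unpair e.2).2)

/-- tiering map on `[n]` induced by `f : Fin n → Fin m` (tiers `1,...,m`). -/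
def tf (n m : ℕ) (f : Fin n → Fin m) : ℕ → ℕ := fun v =>
  if h : v ∈ Finset.Icc 1 n then
    (f ⟨v - 1, by have := Finset.mem_Icc.mp h; omega⟩).1 + 1
  else 0

/-- `G` is a tiered graph with `m` tiers. -/
def IsTieredM (m : ℕ) (G : PreGraph) : Prop :=
  (∀ e ∈ G.E, e.1 ∈ G.V ∧ e.2 ∈ G.V ∧ e.1 < e.2) ∧
  (∀ v ∈ G.V, G.t v ∈ Finset.Icc 1 m) ∧
  (∀ e ∈ G.E, G.t e.1 < G.t e.2) ∧
  (∀ i ∈ Finset.Icc 1 m, ∃ v ∈ G.V, G.t v = i)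

/-- weight polynomial `P_p(q)` (recursive weight), evaluated at `q`. -/
def Pw (n m : ℕ) (p : ℕ → ℕ) (q : ℤ) : ℤ :=
  ∑ f : Fin n → Fin m,
    ∑ E ∈ ((Finset.Icc 1 n ×ˢ Finset.Icc 1 n).powerset.filter fun E =>
        IsTreeG ⟨Finset.Icc 1 n, E, tf n m f⟩ ∧ IsTieredM m ⟨Finset.Icc 1 n, E, tf n m f⟩ ∧
        ∀ i ∈ Finset.Icc 1 m, ((Finset.Icc 1 n).filter fun v => tf n m f v = i).card = p i),
      q ^ weight ⟨Finset.Icc 1 n, E, tf n m f⟩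

/-- weight polynomial `P_p(q)` with the weight of a tiered tree given by its external
activity in the complete tiered graph it determines (lexicographic edge order). -/
def PwEA (n m : ℕ) (p : ℕ → ℕ) (q : ℤ) : ℤ :=
  ∑ f : Fin n → Fin m,
    ∑ E ∈ ((Finset.Icc 1 n ×ˢ Finset.Icc 1 n).powerset.filter fun E =>
        IsTreeG ⟨Finset.Icc 1 n, E, tf n m f⟩ ∧ IsTieredM m ⟨Finset.Icc 1 n, E, tf n m f⟩ ∧
        ∀ i ∈ Finset.Icc 1 m, ((Finset.Icc 1 n).filter fun v => tf n m f v = i).card = p i),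
      q ^ eaP (ctEM n (tf n m f)) E (omegaLex n)

/-- `T^c_G(y)`: the Tutte evaluation `T_G(1,y)` (spanning tree expansion) for a connected
graph, `0` otherwise. -/
def TcP (V : Finset ℕ) (E : Finset PEdge) (ω : PEdge → ℝ) (y : ℤ) : ℤ :=
  if connP V E then ∑ T ∈ E.powerset.filter (fun T => IsTreeOn V T), y ^ eaP E T ω else 0

/-- edge multiset of `H ∪ Q_S`: `H`-edges (labels `≠ 0`) together with the complete
tiered graph on `U` with tier-1 set `S` (labelled `0`). -/
def qE (U : Finset ℕ) (EH : Finset LEdge) (S : Finset ℕ) : Finset LEdge :=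
  EH ∪ (ctE2 S (U \ S)).image fun p => (p, 0)

/-- `(S,T) ↦ (S*, T*)`: the dual quasi-tiered tree. -/
def dualTree (U : Finset ℕ) (ST : Finset ℕ × Finset LEdge) : Finset ℕ × Finset LEdge :=
  (U.filter fun v =>
      (cdual ⟨U, (ST.2.filter fun e => e.2 = 0).image Prod.fst,
        fun w => if w ∈ ST.1 then 1 else 2⟩).t v = 1,
   (ST.2.filter fun e => e.2 ≠ 0) ∪
     (cdual ⟨U, (ST.2.filter fun e => e.2 = 0).image Prod.fst,
        fun w => if w ∈ ST.1 then 1 else 2⟩).E.image fun p => (p, 0))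

/-- tiered forests on `U` with tier sizes `(p1, p2)` (tier map normalised off `U`). -/
def ForestSet (U : Finset ℕ) (p1 p2 : ℕ) : Set PreGraph :=
  {F | F.V = U ∧ IsTiered F ∧ IsForest F ∧
    (U.filter fun v => F.t v = 1).card = p1 ∧
    (U.filter fun v => F.t v = 2).card = p2 ∧
    ∀ v, v ∉ U → F.t v = 0}

/-!
On every component `C` of the forest `F`, the dual applies the order-reversing involution of `C`
and swaps the two tiers. An edge `u < v` from tier 1 to tier 2 thus becomes the edge
`flip v < flip u`, again from the new tier 1 to the new tier 2, so `F'` is a forest of the complete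
tiered graph with tier sizes `(p₂, p₁)`. Its components are those of `F`, so `E₀ ∪ F'` is still a
connected spanning subgraph with as many edges as `T`. Because the components do not change, the
dual of `F'` uses the same flips, and `T ↦ T*` is an involution.
-/

section Reach

variable {E : Finset PEdge}

lemma reachP_symm {u v : ℕ} (h : reachP E u v) : reachP E v u :=
  Relation.ReflTransGen.mono (fun _ _ => Or.symm) _ _ (Relation.ReflTransGen.swap _ _ h)

lemma reachP_of_mem {e : PEdge} (he : e ∈ E) : reachP E e.1 e.2 :=
  .single (.inl he)

lemma mem_comp {V : Finset ℕ} {x y : ℕ} : y ∈ comp V E x ↔ y ∈ V ∧ reachP E x y := mem_filter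

lemma mem_comp_self {V : Finset ℕ} {x : ℕ} (hx : x ∈ V) : x ∈ comp V E x :=
  mem_comp.mpr ⟨hx, .refl⟩

lemma comp_eq_of_reachP {V : Finset ℕ} {x y : ℕ} (h : reachP E x y) :
    comp V E x = comp V E y := by
  ext z
  simp only [mem_comp, and_congr_right_iff]
  exact fun _ => ⟨(reachP_symm h).trans, h.trans⟩

end Reach

section FlipMap

variable {V : Finset ℕ} {x y : ℕ}

lemma flipMap_orderIsoOfFin (j : Fin V.card) :
    flipMap V (V.orderIsoOfFin rfl j) = V.orderIsoOfFin rfl j.rev := by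
  rw [flipMap, dif_pos (Subtype.property _)]
  congr 2
  ext
  simp only [Subtype.coe_eta, OrderIso.symm_apply_apply, Fin.val_rev]
  omega

lemma exists_orderIsoOfFin_eq (hx : x ∈ V) : ∃ j : Fin V.card, (V.orderIsoOfFin rfl j : ℕ) = x :=
  ⟨(V.orderIsoOfFin rfl).symm ⟨x, hx⟩, by simp⟩

lemma flipMap_of_notMem (hx : x ∉ V) : flipMap V x = x := dif_neg hx

lemma flipMap_mem (hx : x ∈ V) : flipMap V x ∈ V := by
  obtain ⟨j, rfl⟩ := exists_orderIsoOfFin_eq hx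
  rw [flipMap_orderIsoOfFin]
  exact Subtype.property _

lemma flipMap_flipMap (V : Finset ℕ) (x : ℕ) : flipMap V (flipMap V x) = x := by
  by_cases hx : x ∈ V
  · obtain ⟨j, rfl⟩ := exists_orderIsoOfFin_eq hx
    rw [flipMap_orderIsoOfFin, flipMap_orderIsoOfFin, Fin.rev_rev]
  · rw [flipMap_of_notMem hx, flipMap_of_notMem hx]

lemma flipMap_lt_flipMap (hx : x ∈ V) (hy : y ∈ V) (hxy : x < y) :
    flipMap V y < flipMap V x := by
  obtain ⟨i, rfl⟩ := exists_orderIsoOfFin_eq hx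
  obtain ⟨j, rfl⟩ := exists_orderIsoOfFin_eq hy
  rw [flipMap_orderIsoOfFin, flipMap_orderIsoOfFin, Subtype.coe_lt_coe, OrderIso.lt_iff_lt,
    Fin.rev_lt_rev, ← OrderIso.lt_iff_lt (V.orderIsoOfFin rfl)]
  exact hxy

end FlipMap

def compFlip (V : Finset ℕ) (E : Finset PEdge) (x : ℕ) : ℕ := flipMap (comp V E x) x

def flipEdge (V : Finset ℕ) (E : Finset PEdge) (e : PEdge) : PEdge :=
  (compFlip V E e.2, compFlip V E e.1)

def dualEdges (V : Finset ℕ) (E : Finset PEdge) : Finset PEdge := E.image (flipEdge V E)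

section CompFlip

variable {V : Finset ℕ} {E : Finset PEdge} {x : ℕ}

lemma compFlip_of_notMem (hx : x ∉ V) : compFlip V E x = x :=
  flipMap_of_notMem fun h => hx (mem_comp.mp h).1

lemma compFlip_mem_comp (hx : x ∈ V) : compFlip V E x ∈ comp V E x :=
  flipMap_mem (mem_comp_self hx)

lemma compFlip_mem (hx : x ∈ V) : compFlip V E x ∈ V :=
  (mem_comp.mp (compFlip_mem_comp hx)).1

lemma reachP_compFlip (V : Finset ℕ) (E : Finset PEdge) (x : ℕ) : reachP E x (compFlip V E x) := by
  by_cases hx : x ∈ V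
  · exact (mem_comp.mp (compFlip_mem_comp hx)).2
  · rw [compFlip_of_notMem hx]
    exact .refl

lemma compFlip_compFlip (V : Finset ℕ) (E : Finset PEdge) (x : ℕ) :
    compFlip V E (compFlip V E x) = x := by
  rw [compFlip, ← comp_eq_of_reachP (reachP_compFlip V E x)]
  exact flipMap_flipMap _ _

lemma compFlip_involutive (V : Finset ℕ) (E : Finset PEdge) : Function.Involutive (compFlip V E) :=
  compFlip_compFlip V E

lemma compFlip_lt_compFlip {e : PEdge} (he : e ∈ E) (h1 : e.1 ∈ V) (h2 : e.2 ∈ V)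
    (hlt : e.1 < e.2) : compFlip V E e.2 < compFlip V E e.1 := by
  have hc : comp V E e.1 = comp V E e.2 := comp_eq_of_reachP (reachP_of_mem he)
  rw [compFlip, compFlip, ← hc]
  exact flipMap_lt_flipMap (mem_comp_self h1) (hc ▸ mem_comp_self h2) hlt

lemma flipEdge_involutive (V : Finset ℕ) (E : Finset PEdge) :
    Function.Involutive (flipEdge V E) := fun e => by
  simp [flipEdge, compFlip_compFlip]

lemma card_dualEdges (V : Finset ℕ) (E : Finset PEdge) : (dualEdges V E).card = E.card :=
  card_image_of_injective _ (flipEdge_involutive V E).injective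

lemma mem_dualEdges {e : PEdge} : e ∈ dualEdges V E ↔ flipEdge V E e ∈ E :=
  ⟨fun h => by
    obtain ⟨e', he', rfl⟩ := mem_image.mp h
    rwa [flipEdge_involutive],
   fun h => mem_image.mpr ⟨_, h, flipEdge_involutive V E e⟩⟩

lemma adjP_dualEdges_iff {u v : ℕ} :
    adjP (dualEdges V E) u v ↔ adjP E (compFlip V E u) (compFlip V E v) := by
  rw [adjP, adjP, mem_dualEdges, mem_dualEdges, or_comm]
  rfl

/-- An `E`-edge `uv` becomes the edge between the flips of `u` and `v`, both of which lie in the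
component of `u` and `v`; so the components do not change. -/
lemma reachP_dualEdges_iff {u v : ℕ} : reachP (dualEdges V E) u v ↔ reachP E u v := by
  have flip_reach : ∀ {a b}, reachP (dualEdges V E) a b →
      reachP E (compFlip V E a) (compFlip V E b) := fun h =>
    Relation.ReflTransGen.lift (compFlip V E) (fun _ _ => adjP_dualEdges_iff.mp) _ _ h
  have reach_flip : ∀ {a b}, reachP E a b →
      reachP (dualEdges V E) (compFlip V E a) (compFlip V E b) := fun h =>
    Relation.ReflTransGen.lift (compFlip V E)
      (fun _ _ hab => adjP_dualEdges_iff.mpr (by rwa [compFlip_compFlip, compFlip_compFlip])) _ _ h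
  have reach_self : ∀ a, reachP (dualEdges V E) a (compFlip V E a) := fun a => by
    simpa only [compFlip_compFlip] using reachP_symm (reach_flip (reachP_compFlip V E a))
  constructor
  · intro h
    exact ((reachP_compFlip V E u).trans (flip_reach h)).trans (reachP_symm (reachP_compFlip V E v))
  · intro h
    exact ((reach_self u).trans (reach_flip h)).trans (reachP_symm (reach_self v))

lemma compFlip_dualEdges : compFlip V (dualEdges V E) = compFlip V E := by
  funext x
  simp only [compFlip, comp, reachP_dualEdges_iff]

lemma dualEdges_dualEdges : dualEdges V (dualEdges V E) = E := by
  rw [dualEdges, dualEdges, image_image]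
  have : flipEdge V (E.image (flipEdge V E)) = flipEdge V E := by
    funext e
    rw [flipEdge, flipEdge, ← dualEdges, compFlip_dualEdges]
  rw [this, (flipEdge_involutive V E).comp_self, image_id]

end CompFlip

/-- The forest `F = E(T) \ E(H)`: in `qE` the edges of `Q` are those labelled `0`. -/
def forestPart (T : Finset LEdge) : Finset PEdge := (T.filter fun e => e.2 = 0).image Prod.fst

def liftZero (E : Finset PEdge) : Finset LEdge := E.image fun p => (p, 0)

/-- The tier-1 set of the componentwise dual of the forest `E` on `U` with tier-1 set `S`. -/
def dualTier (U : Finset ℕ) (E : Finset PEdge) (S : Finset ℕ) : Finset ℕ :=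
  U.filter fun v => compFlip U E v ∉ S

section Labels

variable {T A : Finset LEdge} {E : Finset PEdge}

lemma mem_liftZero {e : LEdge} : e ∈ liftZero E ↔ e.1 ∈ E ∧ e.2 = 0 := by
  constructor
  · rintro h
    obtain ⟨p, hp, rfl⟩ := mem_image.mp h
    exact ⟨hp, rfl⟩
  · rintro ⟨he, h0⟩
    exact mem_image.mpr ⟨e.1, he, Prod.ext rfl h0.symm⟩

lemma card_liftZero (E : Finset PEdge) : (liftZero E).card = E.card :=
  card_image_of_injective _ fun _ _ h => (Prod.ext_iff.mp h).1

lemma liftZero_forestPart (T : Finset LEdge) :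
    liftZero (forestPart T) = T.filter fun e => e.2 = 0 := by
  ext e
  simp only [mem_liftZero, forestPart, mem_image, mem_filter]
  constructor
  · rintro ⟨⟨f, ⟨hf, hf0⟩, hfe⟩, he0⟩
    rw [show e = f from Prod.ext hfe.symm (he0.trans hf0.symm)]
    exact ⟨hf, hf0⟩
  · rintro ⟨he, he0⟩
    exact ⟨⟨e, ⟨he, he0⟩, rfl⟩, he0⟩

lemma filter_ne_union_liftZero_forestPart (T : Finset LEdge) :
    T.filter (fun e => e.2 ≠ 0) ∪ liftZero (forestPart T) = T := by
  rw [liftZero_forestPart, union_comm, filter_union_filter_not_eq]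

lemma filter_eq_union_liftZero (hA : ∀ e ∈ A, e.2 ≠ 0) :
    (A ∪ liftZero E).filter (fun e => e.2 = 0) = liftZero E := by
  ext e
  simp only [mem_filter, mem_union, mem_liftZero]
  constructor
  · rintro ⟨he | he, he0⟩
    exacts [absurd he0 (hA e he), he]
  · exact fun he => ⟨.inr he, he.2⟩

lemma forestPart_union_liftZero (hA : ∀ e ∈ A, e.2 ≠ 0) : forestPart (A ∪ liftZero E) = E := by
  rw [forestPart, filter_eq_union_liftZero hA, liftZero, image_image]
  exact image_id

lemma filter_ne_union_liftZero (hA : ∀ e ∈ A, e.2 ≠ 0) :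
    (A ∪ liftZero E).filter (fun e => e.2 ≠ 0) = A := by
  ext e
  simp only [mem_filter, mem_union, mem_liftZero]
  constructor
  · rintro ⟨he | he, he0⟩
    exacts [he, absurd he.2 he0]
  · exact fun he => ⟨.inl he, hA e he⟩

lemma reachL_liftZero {x y : ℕ} (h : reachP E x y) : reachL (liftZero E) x y :=
  Relation.ReflTransGen.lift id (fun u v huv => huv.elim
    (fun h => ⟨((u, v), 0), mem_liftZero.mpr ⟨h, rfl⟩, .inl rfl⟩)
    (fun h => ⟨((v, u), 0), mem_liftZero.mpr ⟨h, rfl⟩, .inr rfl⟩)) _ _ h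

lemma forestPart_subset_ctE2 {U S : Finset ℕ} {EH : Finset LEdge} (hEH : ∀ e ∈ EH, e.2 ≠ 0)
    (hT : T ⊆ qE U EH S) : forestPart T ⊆ ctE2 S (U \ S) := by
  intro p hp
  obtain ⟨e, he, rfl⟩ := mem_image.mp hp
  obtain ⟨heT, he0⟩ := mem_filter.mp he
  rcases mem_union.mp (hT heT) with heH | heQ
  · exact absurd he0 (hEH e heH)
  · obtain ⟨q, hq, rfl⟩ := mem_image.mp heQ
    exact hq

end Labels

section DualTree

variable {U S : Finset ℕ} {T : Finset LEdge}

lemma dualTree_fst (U : Finset ℕ) (ST : Finset ℕ × Finset LEdge) :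
    (dualTree U ST).1 = dualTier U (forestPart ST.2) ST.1 := by
  ext v
  simp only [dualTree, cdual, dualTier, mem_filter, and_congr_right_iff]
  intro hv
  rw [if_pos hv]
  change 3 - (if compFlip U (forestPart ST.2) v ∈ ST.1 then 1 else 2) = 1 ↔ _
  split_ifs <;> simp_all

lemma dualTree_snd (U : Finset ℕ) (ST : Finset ℕ × Finset LEdge) :
    (dualTree U ST).2 =
      ST.2.filter (fun e => e.2 ≠ 0) ∪ liftZero (dualEdges U (forestPart ST.2)) := by
  suffices h : (cdual ⟨U, forestPart ST.2, fun w => if w ∈ ST.1 then 1 else 2⟩).E =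
      dualEdges U (forestPart ST.2) by
    rw [← h]
    rfl
  refine image_congr fun e he => ?_
  have hc := comp_eq_of_reachP (V := U) (reachP_of_mem (mem_coe.mp he))
  simp only [flipEdge, compFlip, hc]

lemma card_dualTier (hS : S ⊆ U) (E : Finset PEdge) :
    (dualTier U E S).card = U.card - S.card := by
  have h : dualTier U E S = (U \ S).image (compFlip U E) := by
    ext v
    simp only [dualTier, mem_filter, mem_image, mem_sdiff]
    constructor
    · rintro ⟨hv, hvS⟩
      exact ⟨compFlip U E v, ⟨compFlip_mem hv, hvS⟩, compFlip_compFlip U E v⟩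
    · rintro ⟨w, ⟨hw, hwS⟩, rfl⟩
      exact ⟨compFlip_mem hw, by rwa [compFlip_compFlip]⟩
  rw [h, card_image_of_injective _ (compFlip_involutive U E).injective, card_sdiff_of_subset hS]

lemma dualTier_dualTier (hS : S ⊆ U) (E : Finset PEdge) :
    dualTier U (dualEdges U E) (dualTier U E S) = S := by
  ext v
  simp only [dualTier, compFlip_dualEdges, mem_filter, compFlip_compFlip, not_and, not_not]
  exact ⟨fun ⟨hv, h⟩ => h (compFlip_mem hv), fun hvS => ⟨hS hvS, fun _ => hvS⟩⟩

lemma dualEdges_subset_ctE2 {E : Finset PEdge} (hS : S ⊆ U) (hE : E ⊆ ctE2 S (U \ S)) :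
    dualEdges U E ⊆ ctE2 (dualTier U E S) (U \ dualTier U E S) := by
  intro f hf
  obtain ⟨e, he, rfl⟩ := mem_image.mp hf
  obtain ⟨he', hlt⟩ := mem_filter.mp (hE he)
  obtain ⟨h1, h2U, h2S⟩ := by simpa only [mem_product, mem_sdiff] using he'
  simp only [ctE2, flipEdge, dualTier, mem_filter, mem_product, mem_sdiff, compFlip_compFlip,
    not_and, not_not]
  exact ⟨⟨⟨compFlip_mem h2U, h2S⟩, compFlip_mem (hS h1), fun _ => h1⟩,
    compFlip_lt_compFlip he (hS h1) h2U hlt⟩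

lemma dualTree_snd_subset_qE {EH : Finset LEdge} (hEH : ∀ e ∈ EH, e.2 ≠ 0) (hS : S ⊆ U)
    (hT : T ⊆ qE U EH S) : (dualTree U (S, T)).2 ⊆ qE U EH (dualTree U (S, T)).1 := by
  rw [dualTree_fst, dualTree_snd]
  refine union_subset_union (fun e he => ?_) (image_subset_image ?_)
  · obtain ⟨heT, he0⟩ := mem_filter.mp he
    rcases mem_union.mp (hT heT) with heH | heQ
    · exact heH
    · exact absurd (mem_liftZero.mp heQ).2 he0
  · exact dualEdges_subset_ctE2 hS (forestPart_subset_ctE2 hEH hT)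

lemma card_dualTree_snd : (dualTree U (S, T)).2.card = T.card := by
  conv_rhs => rw [← filter_ne_union_liftZero_forestPart T]
  rw [dualTree_snd, card_union_of_disjoint, card_union_of_disjoint, card_liftZero, card_liftZero,
    card_dualEdges] <;>
  exact disjoint_left.mpr fun e he he' => (mem_filter.mp he).2 (mem_liftZero.mp he').2

lemma reachL_dualTree_snd {u v : ℕ} (h : reachL T u v) : reachL (dualTree U (S, T)).2 u v := by
  rw [dualTree_snd]
  refine Relation.ReflTransGen.lift' id (fun a b ⟨e, heT, hab⟩ => ?_) _ _ h
  by_cases he0 : e.2 = 0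
  · have hE : reachP (forestPart T) a b := by
      have he : e.1 ∈ forestPart T := mem_image_of_mem _ (mem_filter.mpr ⟨heT, he0⟩)
      rcases hab with hab | hab <;> rw [hab] at he
      exacts [reachP_of_mem he, reachP_symm (reachP_of_mem he)]
    exact Relation.ReflTransGen.mono (fun _ _ ⟨f, hf, h⟩ => ⟨f, mem_union_right _ hf, h⟩) _ _
      (reachL_liftZero (reachP_dualEdges_iff.mpr hE))
  · exact .single ⟨e, mem_union_left _ (mem_filter.mpr ⟨heT, he0⟩), hab⟩

lemma dualTree_dualTree (hS : S ⊆ U) : dualTree U (dualTree U (S, T)) = (S, T) := by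
  have hA : ∀ e ∈ T.filter (fun e => e.2 ≠ 0), e.2 ≠ 0 := fun e he => (mem_filter.mp he).2
  ext1
  · rw [dualTree_fst, dualTree_snd, forestPart_union_liftZero hA, dualTree_fst,
      dualTier_dualTier hS]
  · rw [dualTree_snd, dualTree_snd, forestPart_union_liftZero hA, filter_ne_union_liftZero hA,
      dualEdges_dualEdges, filter_ne_union_liftZero_forestPart]

end DualTree

lemma mapsTo_dualTree {VH U : Finset ℕ} {EH : Finset LEdge} (hEH : ∀ e ∈ EH, e.2 ≠ 0)
    {p1 p2 : ℕ} (hp : p1 + p2 = U.card) :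
    Set.MapsTo (dualTree U)
      {ST : Finset ℕ × Finset LEdge |
        ST.1 ⊆ U ∧ ST.1.card = p1 ∧ ST.2 ⊆ qE U EH ST.1 ∧ IsLTree VH ST.2}
      {ST : Finset ℕ × Finset LEdge |
        ST.1 ⊆ U ∧ ST.1.card = p2 ∧ ST.2 ⊆ qE U EH ST.1 ∧ IsLTree VH ST.2} := by
  rintro ⟨S, T⟩ ⟨hS, hcard, hT, hconn, hcardT⟩
  refine ⟨?_, ?_, dualTree_snd_subset_qE hEH hS hT, fun u hu v hv => ?_, ?_⟩
  · rw [dualTree_fst]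
    exact filter_subset _ _
  · rw [dualTree_fst, card_dualTier hS, hcard]
    omega
  · exact reachL_dualTree_snd (hconn u hu v hv)
  · rw [card_dualTree_snd]
    exact hcardT

theorem stmt12_general (VH : Finset ℕ) (EH : Finset LEdge)
    (hEH : ∀ e ∈ EH, e.1.1 ∈ VH ∧ e.1.2 ∈ VH ∧ e.2 ≠ 0)
    (U : Finset ℕ) (p1 p2 : ℕ) (hp : p1 + p2 = U.card) :
    Set.BijOn (dualTree U)
      {ST : Finset ℕ × Finset LEdge |
        ST.1 ⊆ U ∧ ST.1.card = p1 ∧ ST.2 ⊆ qE U EH ST.1 ∧ IsLTree VH ST.2}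
      {ST : Finset ℕ × Finset LEdge |
        ST.1 ⊆ U ∧ ST.1.card = p2 ∧ ST.2 ⊆ qE U EH ST.1 ∧ IsLTree VH ST.2} := by
  have hlabel : ∀ e ∈ EH, e.2 ≠ 0 := fun e he => (hEH e he).2.2
  refine Set.InvOn.bijOn ⟨?_, ?_⟩ (mapsTo_dualTree hlabel hp) (mapsTo_dualTree hlabel (by omega))
    <;> exact fun ST hST => dualTree_dualTree hST.1

/-- `T ↦ T*` is a bijection from the quasi-tiered spanning trees of the
graphs `H ∪ Q` (`Q` complete tiered on `U` with tier sizes `(p1,p2)`) to those of the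
graphs `H ∪ Q'` (tier sizes `(p2,p1)`).  A quasi-tiered spanning tree is a pair
`(S, T)` of the tier-1 set and the (labelled) edge set. -/
theorem stmt12 (VH : Finset ℕ) (EH : Finset LEdge)
    (hEH : ∀ e ∈ EH, e.1.1 ∈ VH ∧ e.1.2 ∈ VH ∧ e.2 ≠ 0)
    (U : Finset ℕ) (hUV : U ⊆ VH) (hUne : U.Nonempty) (hpos : ∀ v ∈ U, 0 < v)
    (p1 p2 : ℕ) (hp : p1 + p2 = U.card) :
    Set.BijOn (dualTree U)
      {ST : Finset ℕ × Finset LEdge |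
        ST.1 ⊆ U ∧ ST.1.card = p1 ∧ ST.2 ⊆ qE U EH ST.1 ∧ IsLTree VH ST.2}
      {ST : Finset ℕ × Finset LEdge |
        ST.1 ⊆ U ∧ ST.1.card = p2 ∧ ST.2 ⊆ qE U EH ST.1 ∧ IsLTree VH ST.2} :=
  stmt12_general VH EH hEH U p1 p2 hp

end
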